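/- arXiv:2106.08340 — 3 statements merged into one kernel-verified Lean document; each statement's English description precedes it below -/
import Mathlib

section
/- For a complex number z, two nonnegative integers α, β, the ratio of Gamma functions satisfies Γ(z+α)/Γ(z-β) = ∑_{l=0}^{α+β} ((α+β)!/(l! (α+β-l)!)) · B_{α+β-l}^{(1+α+β)}(α) · z^l, i.e. it is the polynomial in z whose coefficients are given by generalized Bernoulli polynomials. -/
open PowerSeries

/-- The generalized Bernoulli polynomial `B_n^{(m)}(t)`, defined by the generating
function `(x/(e^x - 1))^m · e^{tx} = ∑_{n≥0} B_n^{(m)}(t) x^n / n!`. -/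
noncomputable def genBernoulli (m : ℕ) (t : ℚ) (n : ℕ) : ℚ :=
  n.factorial *
    PowerSeries.coeff n
      ((bernoulliPowerSeries ℚ) ^ m * PowerSeries.rescale t (PowerSeries.exp ℚ))

private lemma exp_deriv : d⁄dX ℚ (exp ℚ) = exp ℚ := by
  ext n
  rw [coeff_derivative, coeff_exp, coeff_exp]
  simp only [Algebra.algebraMap_self, RingHom.id_apply]
  rw [Nat.factorial_succ]
  push_cast
  rw [div_mul_eq_mul_div, mul_comm]
  field_simp

private lemma key_deriv :
    X * d⁄dX ℚ (bernoulliPowerSeries ℚ) =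
      bernoulliPowerSeries ℚ - X * bernoulliPowerSeries ℚ - bernoulliPowerSeries ℚ ^ 2 := by
  have h := bernoulliPowerSeries_mul_exp_sub_one ℚ
  have hd := congrArg (d⁄dX ℚ) h
  rw [Derivation.leibniz, derivative_X, map_sub, exp_deriv] at hd
  simp only [smul_eq_mul, Derivation.map_one_eq_zero, sub_zero] at hd
  linear_combination (-(bernoulliPowerSeries ℚ + d⁄dX ℚ (bernoulliPowerSeries ℚ))) * h +
    bernoulliPowerSeries ℚ * hd

private lemma coeff_bps_pow (k : ℕ) :
    coeff k (bernoulliPowerSeries ℚ ^ (k + 1)) = (-1) ^ k := by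
  induction k with
  | zero =>
    simp [bernoulliPowerSeries, coeff_mk]
  | succ k ih =>
    set g := bernoulliPowerSeries ℚ with hg
    have e1 : X * d⁄dX ℚ (g ^ (k + 1)) =
        (k + 1) • (g ^ (k + 1) - X * g ^ (k + 1) - g ^ (k + 2)) := by
      rw [Derivation.leibniz_pow, Nat.add_sub_cancel]
      simp only [smul_eq_mul, nsmul_eq_mul]
      push_cast
      linear_combination ((k : ℚ⟦X⟧) + 1) * g ^ k * key_deriv
    have e2 := congrArg (coeff (k + 1)) e1
    rw [coeff_succ_X_mul, coeff_derivative, map_nsmul, map_sub, map_sub, coeff_succ_X_mul,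
      nsmul_eq_mul] at e2
    push_cast at e2
    have hk : ((k : ℚ) + 1) ≠ 0 := by positivity
    have e3 : ((k : ℚ) + 1) * (coeff (k + 1) (g ^ (k + 2)) + coeff k (g ^ (k + 1))) = 0 := by
      linear_combination e2
    rw [ih] at e3
    rcases mul_eq_zero.mp e3 with h | h
    · exact absurd h hk
    · have : coeff (k + 1) (g ^ (k + 2)) = -(-1) ^ k := by linarith
      rw [this]; ring

private lemma coeff_bps_exp_pow (n t : ℕ) (ht : t ≤ n) :
    coeff n (bernoulliPowerSeries ℚ ^ (n + 1) * exp ℚ ^ t) =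
      (-1) ^ n * (if t = 0 then 1 else 0) := by
  set g := bernoulliPowerSeries ℚ with hg
  have h2 : g * exp ℚ = X + g := by
    have h := bernoulliPowerSeries_mul_exp_sub_one ℚ
    rw [← hg] at h
    linear_combination h
  have hsplit : g ^ (n + 1) * exp ℚ ^ t =
      ∑ i ∈ Finset.range (t + 1), X ^ i * g ^ (n + 1 - i) * (t.choose i : ℚ⟦X⟧) := by
    have h1 : g ^ (n + 1) = g ^ (n + 1 - t) * g ^ t := by
      rw [← pow_add]; congr 1; omega
    rw [h1, mul_assoc, ← mul_pow, h2, add_pow, Finset.mul_sum]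
    refine Finset.sum_congr rfl fun i hi => ?_
    rw [Finset.mem_range] at hi
    have : g ^ (n + 1 - t) * g ^ (t - i) = g ^ (n + 1 - i) := by
      rw [← pow_add]; congr 1; omega
    push_cast
    linear_combination (X ^ i * (t.choose i : ℚ⟦X⟧)) * this
  rw [hsplit, map_sum]
  have hterm : ∀ i ∈ Finset.range (t + 1),
      coeff n (X ^ i * g ^ (n + 1 - i) * (t.choose i : ℚ⟦X⟧)) =
        (-1) ^ n * ((-1) ^ i * (t.choose i : ℚ)) := by
    intro i hi
    rw [Finset.mem_range] at hi
    have hin : i ≤ n := le_trans (by omega) ht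
    have hcast : (t.choose i : ℚ⟦X⟧) = C (t.choose i : ℚ) := by
      push_cast; simp
    rw [hcast, mul_comm, coeff_C_mul]
    rw [coeff_X_pow_mul', if_pos hin]
    rw [show n + 1 - i = (n - i) + 1 from by omega, coeff_bps_pow]
    have hs : (-1 : ℚ) ^ (n - i) = (-1) ^ n * (-1) ^ i := by
      have h1 : (-1 : ℚ) ^ (n - i) * (-1) ^ i = (-1) ^ n := by
        rw [← pow_add]; congr 1; omega
      have h2 : (-1 : ℚ) ^ i * (-1) ^ i = 1 := by
        rw [← pow_add, Even.neg_one_pow ⟨i, rfl⟩]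
      linear_combination (-1 : ℚ) ^ i * h1 - (-1 : ℚ) ^ (n - i) * h2
    rw [hs]; ring
  rw [Finset.sum_congr rfl hterm, ← Finset.mul_sum]
  congr 1
  have h := Int.alternating_sum_range_choose (n := t)
  have h2 := congrArg (fun x : ℤ => (x : ℚ)) h
  push_cast at h2
  rw [← h2]

private lemma coeff_mul_rescale_exp {A : Type*} [CommRing A] [Algebra ℚ A]
    (f : A⟦X⟧) (w : A) (n : ℕ) :
    coeff n (f * rescale w (exp A)) =
      ∑ k ∈ Finset.range (n + 1),
        coeff (n - k) f * (algebraMap ℚ A (1 / k.factorial) * w ^ k) := by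
  rw [mul_comm, coeff_mul, Finset.Nat.sum_antidiagonal_eq_sum_range_succ_mk]
  refine Finset.sum_congr rfl fun k hk => ?_
  rw [coeff_rescale, coeff_exp]
  ring

private lemma prod_neg_fact (n : ℕ) :
    ∏ j ∈ Finset.range n, (0 - ((j : ℚ) + 1)) = (-1) ^ n * n.factorial := by
  induction n with
  | zero => simp
  | succ m ihm =>
    rw [Finset.prod_range_succ, ihm, Nat.factorial_succ]
    push_cast
    ring

private lemma poly_eq (n : ℕ) :
    (∑ k ∈ Finset.range (n + 1), Polynomial.C ((n.factorial : ℚ) / k.factorial *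
        coeff (n - k) (bernoulliPowerSeries ℚ ^ (n + 1))) * Polynomial.X ^ k) =
      ∏ j ∈ Finset.range n, (Polynomial.X - Polynomial.C ((j : ℚ) + 1)) := by
  set P : Polynomial ℚ := ∑ k ∈ Finset.range (n + 1), Polynomial.C ((n.factorial : ℚ) / k.factorial *
        coeff (n - k) (bernoulliPowerSeries ℚ ^ (n + 1))) * Polynomial.X ^ k with hP
  set Q : Polynomial ℚ := ∏ j ∈ Finset.range n, (Polynomial.X - Polynomial.C ((j : ℚ) + 1)) with hQ
  set s : Finset ℚ := (Finset.range (n + 1)).image (Nat.cast) with hs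
  have hcard : s.card = n + 1 := by
    rw [hs, Finset.card_image_of_injective _ Nat.cast_injective, Finset.card_range]
  have hPdeg : P.degree < s.card := by
    rw [hcard]
    refine lt_of_le_of_lt (Polynomial.degree_sum_le _ _) ?_
    rw [Finset.sup_lt_iff (by exact_mod_cast WithBot.bot_lt_coe (n + 1))]
    intro k hk
    refine lt_of_le_of_lt (Polynomial.degree_C_mul_X_pow_le _ _) ?_
    rw [Finset.mem_range] at hk
    exact_mod_cast WithBot.coe_lt_coe.mpr hk
  have hQdeg : Q.degree < s.card := by
    rw [hcard, hQ, Polynomial.degree_prod]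
    have : ∀ j ∈ Finset.range n, (Polynomial.X - Polynomial.C ((j : ℚ) + 1)).degree = 1 :=
      fun j _ => Polynomial.degree_X_sub_C _
    rw [Finset.sum_congr rfl this]
    simp only [Finset.sum_const, Finset.card_range, nsmul_eq_mul, mul_one]
    exact_mod_cast WithBot.coe_lt_coe.mpr (Nat.lt_succ_self n)
  have heval : ∀ x ∈ s, P.eval x = Q.eval x := by
    intro x hx
    rw [hs, Finset.mem_image] at hx
    obtain ⟨t, ht, rfl⟩ := hx
    rw [Finset.mem_range, Nat.lt_succ_iff] at ht
    have hPeval : P.eval (t : ℚ) = (n.factorial : ℚ) * ((-1) ^ n * (if t = 0 then 1 else 0)) := by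
      rw [← coeff_bps_exp_pow n t ht, exp_pow_eq_rescale_exp,
        coeff_mul_rescale_exp, hP, Polynomial.eval_finset_sum, Finset.mul_sum]
      refine Finset.sum_congr rfl fun k hk => ?_
      simp only [Polynomial.eval_mul, Polynomial.eval_C, Polynomial.eval_pow, Polynomial.eval_X,
        Algebra.algebraMap_self, RingHom.id_apply]
      ring
    rw [hPeval, hQ, Polynomial.eval_prod]
    simp only [Polynomial.eval_sub, Polynomial.eval_X, Polynomial.eval_C]
    by_cases h0 : t = 0
    · subst h0
      rw [if_pos rfl]
      push_cast
      rw [prod_neg_fact]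
      ring
    · rw [if_neg h0, mul_zero, mul_zero]
      symm
      refine Finset.prod_eq_zero (i := t - 1) (Finset.mem_range.mpr (by omega)) ?_
      have h1 : ((t - 1 : ℕ) : ℚ) = (t : ℚ) - 1 := by
        have h2 : (1 : ℕ) ≤ t := by omega
        push_cast [Nat.cast_sub h2]
        ring
      rw [h1]
      ring
  exact Polynomial.eq_of_degrees_lt_of_eval_finset_eq s hPdeg hQdeg heval

private lemma map_bps : map (algebraMap ℚ ℂ) (bernoulliPowerSeries ℚ) = bernoulliPowerSeries ℂ := by
  ext n
  simp [bernoulliPowerSeries, coeff_map]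

private lemma map_rescale' {A B : Type*} [CommSemiring A] [CommSemiring B]
    (f : A →+* B) (a : A) (φ : A⟦X⟧) :
    map f (rescale a φ) = rescale (f a) (map f φ) := by
  ext n
  simp [coeff_map, coeff_rescale]

private lemma coeff_bps_C (j m : ℕ) :
    coeff j (bernoulliPowerSeries ℂ ^ m) =
      algebraMap ℚ ℂ (coeff j (bernoulliPowerSeries ℚ ^ m)) := by
  rw [← map_bps, ← map_pow, coeff_map]

private lemma key_complex (n : ℕ) (w : ℂ) :
    (n.factorial : ℂ) * coeff n (bernoulliPowerSeries ℂ ^ (n + 1) * rescale w (exp ℂ)) =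
      ∏ j ∈ Finset.range n, (w - ((j : ℂ) + 1)) := by
  have hev := congrArg (Polynomial.aeval w) (poly_eq n)
  rw [map_sum, map_prod] at hev
  rw [coeff_mul_rescale_exp, Finset.mul_sum]
  have hL : ∀ k ∈ Finset.range (n + 1),
      (n.factorial : ℂ) * (coeff (n - k) (bernoulliPowerSeries ℂ ^ (n + 1)) *
          (algebraMap ℚ ℂ (1 / k.factorial) * w ^ k)) =
        Polynomial.aeval w (Polynomial.C ((n.factorial : ℚ) / k.factorial *
          coeff (n - k) (bernoulliPowerSeries ℚ ^ (n + 1))) * Polynomial.X ^ k) := by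
    intro k hk
    simp only [map_mul, Polynomial.aeval_C, Polynomial.aeval_X_pow]
    rw [coeff_bps_C]
    rw [eq_ratCast (algebraMap ℚ ℂ), eq_ratCast (algebraMap ℚ ℂ)]
    push_cast
    have : ((k.factorial : ℚ) : ℂ) ≠ 0 := by
      exact_mod_cast (Nat.cast_ne_zero (R := ℚ)).mpr k.factorial_ne_zero
    field_simp
  rw [Finset.sum_congr rfl hL, hev]
  refine Finset.prod_congr rfl fun j _ => ?_
  rw [map_sub, Polynomial.aeval_X, Polynomial.aeval_C, eq_ratCast]
  push_cast
  ring

private lemma Gamma_shift (w : ℂ) (hw : ∀ m : ℕ, w ≠ -m) (n : ℕ) :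
    Complex.Gamma (w + n) = (∏ j ∈ Finset.range n, (w + j)) * Complex.Gamma w := by
  induction n with
  | zero => simp
  | succ n ih =>
    have h1 : w + ((n : ℕ) + 1 : ℕ) = (w + n) + 1 := by push_cast; ring
    have h2 : w + (n : ℂ) ≠ 0 := by
      intro h
      exact hw n (by linear_combination h)
    rw [h1, Complex.Gamma_add_one _ h2, ih, Finset.prod_range_succ]
    ring

/-- The Gamma-ratio representation: for complex `z` (such that `z - β` is not a pole of `Γ`),
`Γ(z+α)/Γ(z-β) = ∑_{l=0}^{α+β} ((α+β)!/(l!(α+β-l)!)) B_{α+β-l}^{(1+α+β)}(α) z^l`. -/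
theorem stmt_4 (z : ℂ) (α β : ℕ) (hz : ∀ n : ℕ, z - (β : ℂ) ≠ -(n : ℂ)) :
    Complex.Gamma (z + α) / Complex.Gamma (z - β) =
      ∑ l ∈ Finset.range (α + β + 1),
        (((α + β).factorial : ℂ) / ((l.factorial : ℂ) * ((α + β - l).factorial : ℂ))) *
          ((genBernoulli (1 + α + β) (α : ℚ) (α + β - l) : ℚ) : ℂ) * z ^ l := by
  set n := α + β with hn
  -- LHS
  have hL : Complex.Gamma (z + α) / Complex.Gamma (z - β) =
      ∏ j ∈ Finset.range n, (((α : ℂ) + z) - ((j : ℂ) + 1)) := by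
    have h := Gamma_shift (z - β) hz n
    have h2 : z - (β : ℂ) + (n : ℕ) = z + α := by rw [hn]; push_cast; ring
    rw [h2] at h
    rw [h, mul_div_assoc, div_self (Complex.Gamma_ne_zero hz), mul_one]
    rw [← Finset.prod_range_reflect]
    refine Finset.prod_congr rfl fun j hj => ?_
    rw [Finset.mem_range] at hj
    have hc : ((n - 1 - j : ℕ) : ℂ) = (n : ℂ) - 1 - j := by
      rw [Nat.cast_sub (by omega : j ≤ n - 1), Nat.cast_sub (by omega : 1 ≤ n)]
      push_cast
      ring
    rw [hc, hn]
    push_cast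
    ring
  rw [hL]
  -- RHS
  have hm : 1 + α + β = n + 1 := by omega
  have hG : ∀ l ∈ Finset.range (n + 1),
      ((genBernoulli (1 + α + β) (α : ℚ) (n - l) : ℚ) : ℂ) =
        ((n - l).factorial : ℂ) *
          coeff (n - l) (bernoulliPowerSeries ℂ ^ (n + 1) * rescale (α : ℂ) (exp ℂ)) := by
    intro l hl
    rw [genBernoulli, hm]
    have hmap : coeff (n - l) (bernoulliPowerSeries ℂ ^ (n + 1) * rescale (α : ℂ) (exp ℂ)) =
        algebraMap ℚ ℂ (coeff (n - l)
          (bernoulliPowerSeries ℚ ^ (n + 1) * rescale (α : ℚ) (exp ℚ))) := by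
      have hmap2 : (bernoulliPowerSeries ℂ ^ (n + 1) * rescale (α : ℂ) (exp ℂ)) =
          map (algebraMap ℚ ℂ) (bernoulliPowerSeries ℚ ^ (n + 1) * rescale (α : ℚ) (exp ℚ)) := by
        rw [map_mul, map_pow, map_bps, map_rescale', map_exp]
        norm_num [eq_ratCast]
      rw [hmap2, coeff_map]
    rw [hmap, eq_ratCast]
    push_cast
    ring
  rw [Finset.sum_congr rfl fun l hl => by rw [hG l hl]]
  have hfac : ∀ l ∈ Finset.range (n + 1),
      ((n.factorial : ℂ) / ((l.factorial : ℂ) * ((n - l).factorial : ℂ))) *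
          (((n - l).factorial : ℂ) *
            coeff (n - l) (bernoulliPowerSeries ℂ ^ (n + 1) * rescale (α : ℂ) (exp ℂ))) * z ^ l =
        (n.factorial : ℂ) *
          (coeff (n - l) (bernoulliPowerSeries ℂ ^ (n + 1) * rescale (α : ℂ) (exp ℂ)) *
            (algebraMap ℚ ℂ (1 / l.factorial) * z ^ l)) := by
    intro l hl
    rw [eq_ratCast]
    have hl1 : ((l.factorial : ℚ) : ℂ) ≠ 0 := by
      exact_mod_cast (Nat.cast_ne_zero (R := ℚ)).mpr l.factorial_ne_zero
    have hl2 : (((n - l).factorial : ℚ) : ℂ) ≠ 0 := by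
      exact_mod_cast (Nat.cast_ne_zero (R := ℚ)).mpr (n - l).factorial_ne_zero
    push_cast
    push_cast at hl1 hl2
    field_simp
  rw [Finset.sum_congr rfl hfac, ← Finset.mul_sum, ← coeff_mul_rescale_exp, mul_assoc,
    exp_mul_exp_eq_exp_add, key_complex]
end

section
/- For every nonnegative integer m, the function sinh(φ)/sinh^{2m+3}(φ/2) has the convergent Laurent expansion about φ = 0 given by -2^{2m+3} ∑_{k=0}^∞ (B_{2k+1}^{(2m+3)}(m+1/2)/(2k+1)!) φ^{2k-2m-2}, where B_n^{(m)}(t) are generalized Bernoulli polynomials. -/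
open PowerSeries Real

namespace Stmt13Aux

/-! ### The entire function `(e^z - 1)/z` and its power series -/

/-- Formal multilinear series of `(e^z - 1)/z`. -/
noncomputable def qs : FormalMultilinearSeries ℂ ℂ ℂ :=
  FormalMultilinearSeries.ofScalars ℂ (fun n => (1 : ℂ) / (n + 1).factorial)

lemma qs_radius : qs.radius = ⊤ := by
  apply FormalMultilinearSeries.radius_eq_top_of_summable_norm
  intro r
  refine Summable.of_nonneg_of_le (fun n => by positivity) (fun n => ?_)
    (Real.summable_pow_div_factorial r)
  have h1 : ‖qs n‖ = 1 / ((n + 1).factorial : ℝ) := by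
    rw [qs, FormalMultilinearSeries.ofScalars_norm]
    simp [norm_div]
  rw [h1, div_mul_eq_mul_div, one_mul, div_le_div_iff₀ (by positivity) (by positivity)]
  calc (r : ℝ) ^ n * (n.factorial : ℝ) ≤ (r:ℝ)^n * ((n+1).factorial : ℝ) := by
        gcongr
        exact Nat.le_succ n
    _ = _ := by ring

/-- The entire function `(e^z-1)/z` (with value `1` at `0`). -/
noncomputable def Ef : ℂ → ℂ := qs.sum

/-- The power series of `Ef` as a formal power series. -/
noncomputable def Es : PowerSeries ℂ := PowerSeries.mk fun n => (1 : ℂ) / (n + 1).factorial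

lemma hasSum_Ef (z : ℂ) :
    HasSum (fun n => (1 / ((n + 1).factorial : ℂ)) * z ^ n) (Ef z) := by
  have h := qs.hasSum (x := z) (by simp [qs_radius])
  refine HasSum.congr_fun h fun n => ?_
  rw [qs, FormalMultilinearSeries.ofScalars_apply_eq]
  simp [smul_eq_mul, mul_comm]

lemma hasSum_Es (z : ℂ) :
    HasSum (fun n => PowerSeries.coeff n Es * z ^ n) (Ef z) := by
  have h := hasSum_Ef z
  refine h.congr_fun fun n => ?_
  rw [Es, PowerSeries.coeff_mk]

lemma Ef_mul (z : ℂ) : z * Ef z = Complex.exp z - 1 := by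
  have h := NormedSpace.expSeries_div_hasSum_exp z
  rw [← Complex.exp_eq_exp_ℂ] at h
  have h1 : HasSum (fun n => z ^ (n + 1) / ((n + 1).factorial : ℂ))
      (Complex.exp z - ∑ i ∈ Finset.range 1, z ^ i / (i.factorial : ℂ)) :=
    (hasSum_nat_add_iff' 1).mpr h
  simp only [Finset.range_one, Finset.sum_singleton, pow_zero, Nat.factorial_zero,
    Nat.cast_one, div_one] at h1
  have h2 := (hasSum_Ef z).mul_left z
  refine HasSum.unique ?_ h1
  refine h2.congr_fun fun n => ?_
  rw [pow_succ]
  ring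

lemma Ef_zero : Ef 0 = 1 := by
  have h := hasSum_Ef 0
  have h2 : HasSum (fun n => (1 / ((n + 1).factorial : ℂ)) * (0:ℂ) ^ n) 1 := by
    convert hasSum_single (f := fun n => (1 / ((n + 1).factorial : ℂ)) * (0:ℂ) ^ n) 0
      (fun b hb => by simp [zero_pow hb]) using 1
    simp
  exact h.unique h2

lemma Ef_eq {z : ℂ} (hz : z ≠ 0) : Ef z = (Complex.exp z - 1) / z := by
  rw [← Ef_mul z]; field_simp

lemma exp_ne_one {z : ℂ} (hz : z ≠ 0) (hz2 : ‖z‖ < 2 * π) : Complex.exp z ≠ 1 := by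
  intro h
  obtain ⟨n, hn⟩ := Complex.exp_eq_one_iff.mp h
  have hn0 : n ≠ 0 := by rintro rfl; simp at hn; exact hz hn
  have : (2 * π) ≤ ‖z‖ := by
    rw [hn]
    simp only [norm_mul, Complex.norm_intCast, Complex.norm_ofNat, Complex.norm_real,
      Complex.norm_I, mul_one, Real.norm_eq_abs, abs_of_pos Real.pi_pos]
    calc 2 * π = 1 * (2 * π) := by ring
      _ ≤ |(n:ℝ)| * (2 * π) := by
          have : (1:ℝ) ≤ |(n:ℝ)| := by
            rw [← Int.cast_abs]
            exact_mod_cast Int.one_le_abs hn0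
          nlinarith [Real.pi_pos]
      _ = _ := by ring
  linarith

lemma Ef_ne {z : ℂ} (hz2 : ‖z‖ < 2 * π) : Ef z ≠ 0 := by
  rcases eq_or_ne z 0 with rfl | hz
  · rw [Ef_zero]; exact one_ne_zero
  · rw [Ef_eq hz]
    exact div_ne_zero (sub_ne_zero.mpr (exp_ne_one hz hz2)) hz

lemma Ef_differentiable : Differentiable ℂ Ef := by
  intro z
  have h : HasFPowerSeriesOnBall qs.sum qs 0 ⊤ := by
    rw [← qs_radius]
    exact qs.hasFPowerSeriesOnBall (by rw [qs_radius]; exact ENNReal.zero_lt_top)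
  exact (h.analyticAt_of_mem (by simp)).differentiableAt

/-! ### Cauchy products and uniqueness of coefficients -/

/-- Cauchy product step for power series coefficients. -/
lemma cauchyStep (f g : PowerSeries ℂ) {z : ℂ} {F G : ℂ}
    (hf : HasSum (fun n => PowerSeries.coeff n f * z ^ n) F)
    (hg : HasSum (fun n => PowerSeries.coeff n g * z ^ n) G)
    (hf' : Summable (fun n => ‖PowerSeries.coeff n f * z ^ n‖))
    (hg' : Summable (fun n => ‖PowerSeries.coeff n g * z ^ n‖)) :
    HasSum (fun n => PowerSeries.coeff n (f * g) * z ^ n) (F * G) ∧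
      Summable (fun n => ‖PowerSeries.coeff n (f * g) * z ^ n‖) := by
  have key : ∀ n, ∑ k ∈ Finset.range (n + 1),
      (PowerSeries.coeff k f * z ^ k) * (PowerSeries.coeff (n - k) g * z ^ (n - k))
      = PowerSeries.coeff n (f * g) * z ^ n := by
    intro n
    rw [PowerSeries.coeff_mul, Finset.Nat.sum_antidiagonal_eq_sum_range_succ
      (fun i j => PowerSeries.coeff i f * PowerSeries.coeff j g), Finset.sum_mul]
    refine Finset.sum_congr rfl fun k hk => ?_
    have hkn : k ≤ n := Nat.lt_succ_iff.mp (Finset.mem_range.mp hk)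
    rw [mul_mul_mul_comm, ← pow_add, Nat.add_sub_cancel' hkn]
  constructor
  · have h := hasSum_sum_range_mul_of_summable_norm hf' hg'
    rw [hf.tsum_eq, hg.tsum_eq] at h
    exact h.congr_fun fun n => (key n).symm ▸ rfl
  · have h := summable_norm_sum_mul_range_of_summable_norm hf' hg'
    refine h.congr fun n => ?_
    rw [key]

/-- Uniqueness of scalar power series coefficients. -/
lemma coeff_unique {c d : ℕ → ℂ} {f : ℂ → ℂ}
    (hc : ∀ᶠ z in nhds (0 : ℂ), HasSum (fun n => c n * z ^ n) (f z))
    (hd : ∀ᶠ z in nhds (0 : ℂ), HasSum (fun n => d n * z ^ n) (f z)) : c = d := by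
  have main : ∀ (e : ℕ → ℂ), (∀ᶠ z in nhds (0 : ℂ), HasSum (fun n => e n * z ^ n) (f z)) →
      HasFPowerSeriesAt f (FormalMultilinearSeries.ofScalars ℂ e) 0 := by
    intro e he
    rw [hasFPowerSeriesAt_iff]
    filter_upwards [he] with z hz
    rw [zero_add]
    refine hz.congr_fun fun n => ?_
    have : (FormalMultilinearSeries.ofScalars ℂ e).coeff n = e n := by
      rw [FormalMultilinearSeries.coeff, show (1 : Fin n → ℂ) = fun _ => (1:ℂ) from rfl,
        FormalMultilinearSeries.ofScalars_apply_eq]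
      simp
    rw [this, smul_eq_mul, mul_comm]
  have h := ((main c hc).eq_formalMultilinearSeries (main d hd))
  exact FormalMultilinearSeries.ofScalars_series_injective (𝕜 := ℂ) ℂ h

/-! ### Formal identities -/

lemma X_mul_Es : (PowerSeries.X : PowerSeries ℂ) * Es = PowerSeries.exp ℂ - 1 := by
  ext n
  cases n with
  | zero => simp [Es]
  | succ n =>
    rw [PowerSeries.coeff_succ_X_mul]
    simp only [Es, PowerSeries.coeff_mk, map_sub, PowerSeries.coeff_exp, PowerSeries.coeff_one,
      Nat.succ_ne_zero, if_false, sub_zero]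
    rw [eq_ratCast]
    push_cast
    ring

lemma Es_ne_zero : Es ≠ 0 := by
  intro h
  have := congrArg (PowerSeries.coeff 0) h
  simp [Es] at this

/-- The formal identity `F_t · Es^M = e^{tX}`. -/
lemma formal_identity (M : ℕ) (t : ℂ) :
    (bernoulliPowerSeries ℂ ^ M * PowerSeries.rescale t (PowerSeries.exp ℂ)) * Es ^ M
      = PowerSeries.rescale t (PowerSeries.exp ℂ) := by
  have hB := bernoulliPowerSeries_mul_exp_sub_one ℂ
  have h : ((bernoulliPowerSeries ℂ ^ M * PowerSeries.rescale t (PowerSeries.exp ℂ)) * Es ^ M)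
      * PowerSeries.X ^ M = PowerSeries.rescale t (PowerSeries.exp ℂ) * PowerSeries.X ^ M := by
    calc (bernoulliPowerSeries ℂ ^ M * PowerSeries.rescale t (PowerSeries.exp ℂ)) * Es ^ M
        * PowerSeries.X ^ M
        = PowerSeries.rescale t (PowerSeries.exp ℂ) *
          (bernoulliPowerSeries ℂ * (PowerSeries.exp ℂ - 1)) ^ M := by
          rw [← X_mul_Es]; ring
      _ = _ := by rw [hB]
  exact mul_right_cancel₀ (pow_ne_zero _ PowerSeries.X_ne_zero) h

lemma exp_sub_one_ne_zero : (PowerSeries.exp ℂ - 1) ≠ 0 := by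
  intro h
  have := congrArg (PowerSeries.coeff 1) h
  simp [PowerSeries.coeff_exp, PowerSeries.coeff_one] at this

/-- Reflection symmetry of the generalized Bernoulli generating series. -/
lemma rescale_neg_one (M : ℕ) (t : ℂ) :
    PowerSeries.rescale (-1 : ℂ)
        (bernoulliPowerSeries ℂ ^ M * PowerSeries.rescale t (PowerSeries.exp ℂ))
      = bernoulliPowerSeries ℂ ^ M * PowerSeries.rescale ((M : ℂ) - t) (PowerSeries.exp ℂ) := by
  set B := bernoulliPowerSeries ℂ
  set Ex := PowerSeries.exp ℂ with hEx
  set N := PowerSeries.rescale (-1 : ℂ) Ex with hN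
  have hNE : N * Ex = 1 := by
    have h := PowerSeries.exp_mul_exp_eq_exp_add (-1 : ℂ) 1
    simp only [PowerSeries.rescale_one, RingHom.id_apply] at h
    rw [show (-1 : ℂ) + 1 = 0 by norm_num, PowerSeries.rescale_zero] at h
    show (PowerSeries.rescale (-1:ℂ)) (PowerSeries.exp ℂ) * PowerSeries.exp ℂ = 1
    rw [h]
    simp
  have hB : B * (Ex - 1) = PowerSeries.X := bernoulliPowerSeries_mul_exp_sub_one ℂ
  have base : ∀ s : ℂ, (B ^ M * PowerSeries.rescale s Ex) * (Ex - 1) ^ M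
      = PowerSeries.X ^ M * PowerSeries.rescale s Ex := by
    intro s
    calc (B ^ M * PowerSeries.rescale s Ex) * (Ex - 1) ^ M
        = (B * (Ex - 1)) ^ M * PowerSeries.rescale s Ex := by rw [mul_pow]; ring
      _ = _ := by rw [hB]
  have hrr : ∀ s : ℂ, PowerSeries.rescale (-1:ℂ) (PowerSeries.rescale s Ex)
      = PowerSeries.rescale (-s) Ex := by
    intro s
    rw [PowerSeries.rescale_rescale, show s * (-1:ℂ) = -s by ring]
  have h1 := congrArg (PowerSeries.rescale (-1 : ℂ)) (base t)
  simp only [map_mul, map_pow, map_sub, map_one] at h1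
  rw [hrr t, PowerSeries.rescale_neg_one_X, ← hN] at h1
  set L := PowerSeries.rescale (-1:ℂ) B ^ M * PowerSeries.rescale (-t) Ex with hL
  have hsub : N - 1 = -(N * (Ex - 1)) := by
    rw [mul_sub, hNE, mul_one]; ring
  rw [hsub] at h1
  rw [neg_pow (N * (Ex - 1)), neg_pow (PowerSeries.X : PowerSeries ℂ), mul_pow] at h1
  have hneg : ((-1 : PowerSeries ℂ) ^ M) ≠ 0 := by
    apply pow_ne_zero
    intro h
    have := congrArg (PowerSeries.coeff 0) h
    simp at this
  have h2 : L * (N ^ M * (Ex - 1) ^ M) = PowerSeries.X ^ M * PowerSeries.rescale (-t) Ex := by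
    refine mul_left_cancel₀ hneg ?_
    linear_combination h1
  have hNM : N ^ M * Ex ^ M = 1 := by rw [← mul_pow, hNE, one_pow]
  have h3 : L * (Ex - 1) ^ M
      = PowerSeries.X ^ M * (PowerSeries.rescale (-t) Ex * Ex ^ M) := by
    linear_combination Ex ^ M * h2 - (L * (Ex - 1) ^ M) * hNM
  have hres : PowerSeries.rescale (-t) Ex * Ex ^ M = PowerSeries.rescale ((M:ℂ) - t) Ex := by
    rw [hEx, PowerSeries.exp_pow_eq_rescale_exp, PowerSeries.exp_mul_exp_eq_exp_add,
      show (-t) + (M:ℂ) = (M:ℂ) - t by ring]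
  rw [hres] at h3
  have h4 := h3.trans (base ((M:ℂ) - t)).symm
  have h5 := mul_right_cancel₀ (pow_ne_zero M exp_sub_one_ne_zero) h4
  rw [map_mul, map_pow, hrr t, ← hL]
  exact h5

/-! ### The key convergence result -/

lemma summable_norm_Es (z : ℂ) :
    Summable (fun n => ‖PowerSeries.coeff n Es * z ^ n‖) := by
  refine Summable.of_nonneg_of_le (fun n => norm_nonneg _) (fun n => ?_)
    (Real.summable_pow_div_factorial ‖z‖)
  rw [norm_mul, norm_pow]
  simp only [Es, PowerSeries.coeff_mk, norm_div, norm_one, Complex.norm_natCast]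
  rw [div_mul_eq_mul_div, one_mul, div_le_div_iff₀ (by positivity) (by positivity)]
  calc ‖z‖ ^ n * (n.factorial : ℝ) ≤ ‖z‖ ^ n * ((n+1).factorial : ℝ) := by
        gcongr; exact Nat.le_succ n
    _ = _ := by ring

lemma hasSum_rescale_exp (t z : ℂ) :
    HasSum (fun n => PowerSeries.coeff n (PowerSeries.rescale t (PowerSeries.exp ℂ)) * z ^ n)
      (Complex.exp (t * z)) := by
  have h := NormedSpace.expSeries_div_hasSum_exp (t * z)
  rw [← Complex.exp_eq_exp_ℂ] at h
  refine h.congr_fun fun n => ?_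
  rw [PowerSeries.coeff_rescale, PowerSeries.coeff_exp, eq_ratCast]
  push_cast
  rw [mul_pow]
  ring

lemma keyHasSum (M : ℕ) (t : ℂ) {φ : ℂ} (hφ2 : ‖φ‖ < 2 * π) :
    HasSum (fun n =>
        PowerSeries.coeff n (bernoulliPowerSeries ℂ ^ M
          * PowerSeries.rescale t (PowerSeries.exp ℂ)) * φ ^ n)
      (Complex.exp (t * φ) / Ef φ ^ M) := by
  set r : ℝ := (‖φ‖ + 2 * π) / 2 with hr
  have hr0 : 0 ≤ r := by positivity
  have hφr : ‖φ‖ < r := by rw [hr]; linarith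
  have hr2 : r < 2 * π := by rw [hr]; linarith
  set R : NNReal := ⟨r, hr0⟩ with hR
  have hRr : (R : ℝ) = r := rfl
  have hR0 : 0 < R := by
    rw [← NNReal.coe_lt_coe, hRr]
    push_cast
    linarith [norm_nonneg φ]
  set g : ℂ → ℂ := fun z => Complex.exp (t * z) / Ef z ^ M with hg
  have hgd : DifferentiableOn ℂ g (Metric.closedBall 0 (R : ℝ)) := by
    refine DifferentiableOn.div ?_ ?_ ?_
    · exact (Complex.differentiable_exp.comp ((differentiable_id.const_mul t))).differentiableOn
    · exact (Ef_differentiable.pow M).differentiableOn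
    · intro z hz
      refine pow_ne_zero _ (Ef_ne ?_)
      have := Metric.mem_closedBall.mp hz
      rw [dist_zero_right] at this
      linarith [hRr ▸ this]
  have hball := hgd.hasFPowerSeriesOnBall hR0
  set p := cauchyPowerSeries g 0 R with hp
  set c : ℕ → ℂ := fun n => p.coeff n with hc
  have hsum : ∀ z : ℂ, ‖z‖ < r → HasSum (fun n => c n * z ^ n) (g z) := by
    intro z hz
    have hmem : z ∈ Metric.eball (0 : ℂ) R := by
      rw [Metric.mem_eball, edist_zero_right, enorm_eq_nnnorm, ENNReal.coe_lt_coe]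
      exact_mod_cast (by rw [← hRr] at hz; exact_mod_cast hz : ‖z‖₊ < R)
    have h := hball.hasSum hmem
    rw [zero_add] at h
    refine h.congr_fun fun n => ?_
    rw [FormalMultilinearSeries.apply_eq_pow_smul_coeff, smul_eq_mul, mul_comm]
  have hnorm : ∀ z : ℂ, ‖z‖ < r → Summable (fun n => ‖c n * z ^ n‖) := by
    intro z hz
    have hrad : (‖z‖₊ : ENNReal) < p.radius := by
      refine lt_of_lt_of_le ?_ hball.r_le
      rw [ENNReal.coe_lt_coe]
      exact_mod_cast (by rw [← hRr] at hz; exact_mod_cast hz : ‖z‖₊ < R)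
    have hs := p.summable_norm_mul_pow hrad
    refine Summable.of_nonneg_of_le (fun n => norm_nonneg _) (fun n => ?_) hs
    rw [norm_mul, norm_pow]
    have hcz : ‖c n‖ ≤ ‖p n‖ := by
      have := (p n).le_opNorm (fun _ => (1 : ℂ))
      simp only [norm_one, Finset.prod_const_one, mul_one] at this
      exact this
    calc ‖c n‖ * ‖z‖ ^ n ≤ ‖p n‖ * ‖z‖ ^ n :=
          mul_le_mul_of_nonneg_right hcz (by positivity)
      _ = ‖p n‖ * (‖z‖₊ : ℝ) ^ n := by rw [coe_nnnorm]
  set P : PowerSeries ℂ := PowerSeries.mk c with hP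
  have hPcoeff : ∀ n, PowerSeries.coeff n P = c n := fun n => PowerSeries.coeff_mk n c
  have hpow : ∀ (j : ℕ) (z : ℂ), ‖z‖ < r →
      (HasSum (fun n => PowerSeries.coeff n (P * Es ^ j) * z ^ n) (g z * Ef z ^ j) ∧
       Summable (fun n => ‖PowerSeries.coeff n (P * Es ^ j) * z ^ n‖)) := by
    intro j
    induction j with
    | zero =>
      intro z hz
      simp only [pow_zero, mul_one, hPcoeff]
      exact ⟨hsum z hz, hnorm z hz⟩
    | succ j ih =>
      intro z hz
      have h1 := ih z hz
      have h2 := cauchyStep (P * Es ^ j) Es h1.1 (hasSum_Es z) h1.2 (summable_norm_Es z)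
      have e1 : P * Es ^ j * Es = P * Es ^ (j + 1) := by rw [mul_assoc, ← pow_succ]
      have e2 : g z * Ef z ^ j * Ef z = g z * Ef z ^ (j + 1) := by rw [mul_assoc, ← pow_succ]
      rw [e1, e2] at h2
      exact h2
  have hEfne : ∀ z : ℂ, ‖z‖ < r → Ef z ≠ 0 := fun z hz => Ef_ne (by linarith)
  have hgz : ∀ z : ℂ, ‖z‖ < r → g z * Ef z ^ M = Complex.exp (t * z) := by
    intro z hz
    rw [hg]
    field_simp [pow_ne_zero M (hEfne z hz)]
  have hid : (fun n => PowerSeries.coeff n (P * Es ^ M))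
      = (fun n => PowerSeries.coeff n (PowerSeries.rescale t (PowerSeries.exp ℂ))) := by
    refine coeff_unique (f := fun z => Complex.exp (t * z)) ?_ ?_
    · have hmem : Metric.ball (0:ℂ) r ∈ nhds (0:ℂ) :=
        Metric.ball_mem_nhds 0 (by linarith [norm_nonneg φ])
      filter_upwards [hmem] with z hz
      rw [Metric.mem_ball, dist_zero_right] at hz
      have := (hpow M z hz).1
      rwa [hgz z hz] at this
    · exact Filter.Eventually.of_forall fun z => hasSum_rescale_exp t z
  have hPEs : P * Es ^ M = PowerSeries.rescale t (PowerSeries.exp ℂ) :=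
    PowerSeries.ext fun n => congrFun hid n
  have hPeq : P = bernoulliPowerSeries ℂ ^ M * PowerSeries.rescale t (PowerSeries.exp ℂ) := by
    have := formal_identity M t
    exact mul_right_cancel₀ (pow_ne_zero _ Es_ne_zero) (by rw [hPEs, this])
  have hfinal := hsum φ hφr
  rw [hg] at hfinal
  refine hfinal.congr_fun fun n => ?_
  rw [← hPcoeff n, hPeq]

/-! ### Cast lemmas and the value identity -/

lemma map_F (M : ℕ) (t : ℚ) :
    PowerSeries.map (algebraMap ℚ ℂ)
        (bernoulliPowerSeries ℚ ^ M * PowerSeries.rescale t (PowerSeries.exp ℚ))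
      = bernoulliPowerSeries ℂ ^ M * PowerSeries.rescale (t : ℂ) (PowerSeries.exp ℂ) := by
  have h1 : PowerSeries.map (algebraMap ℚ ℂ) (bernoulliPowerSeries ℚ)
      = bernoulliPowerSeries ℂ := by
    ext n
    simp [bernoulliPowerSeries, PowerSeries.coeff_map]
  have h2 : PowerSeries.map (algebraMap ℚ ℂ) (PowerSeries.rescale t (PowerSeries.exp ℚ))
      = PowerSeries.rescale (t : ℂ) (PowerSeries.exp ℂ) := by
    ext n
    rw [PowerSeries.coeff_map, PowerSeries.coeff_rescale, PowerSeries.coeff_rescale,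
      PowerSeries.coeff_exp, PowerSeries.coeff_exp, map_mul, map_pow]
    simp only [eq_ratCast]
    push_cast
    ring
  rw [map_mul, map_pow, h1, h2]

lemma genBernoulli_cast (M : ℕ) (t : ℚ) (n : ℕ) :
    ((genBernoulli M t n : ℚ) : ℂ) = (n.factorial : ℂ) *
      PowerSeries.coeff n
        (bernoulliPowerSeries ℂ ^ M * PowerSeries.rescale (t : ℂ) (PowerSeries.exp ℂ)) := by
  rw [genBernoulli, ← map_F M t, PowerSeries.coeff_map]
  push_cast [eq_ratCast]
  norm_cast

lemma value_eq (m : ℕ) {φ : ℂ} (hφ : φ ≠ 0) (hφ2 : ‖φ‖ < 2 * π) :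
    (2:ℂ)^(2*m+2) * (φ^(2*m+3))⁻¹ *
      ((Complex.exp (((m:ℂ)+5/2)*φ) - Complex.exp (((m:ℂ)+1/2)*φ)) / Ef φ ^ (2*m+3))
    = Complex.sinh φ / Complex.sinh (φ/2) ^ (2*m+3) := by
  set u := Complex.exp (φ/2) with hu_def
  have hu : u ≠ 0 := Complex.exp_ne_zero _
  have hexp : Complex.exp φ = u ^ 2 := by
    rw [hu_def, ← Complex.exp_nat_mul]
    congr 1
    push_cast
    ring
  have he1 : Complex.exp (((m:ℂ)+5/2)*φ) = u ^ (2*m+5) := by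
    rw [hu_def, ← Complex.exp_nat_mul]
    congr 1
    push_cast
    ring
  have he2 : Complex.exp (((m:ℂ)+1/2)*φ) = u ^ (2*m+1) := by
    rw [hu_def, ← Complex.exp_nat_mul]
    congr 1
    push_cast
    ring
  have hU : u ^ 2 - 1 ≠ 0 := by
    rw [← hexp]
    exact sub_ne_zero.mpr (exp_ne_one hφ hφ2)
  have hEf : Ef φ = (u ^ 2 - 1) / φ := by rw [Ef_eq hφ, hexp]
  have hs1 : Complex.sinh φ = (u ^ 2 - (u ^ 2)⁻¹) / 2 := by
    have := Complex.two_sinh (x := φ)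
    rw [Complex.exp_neg, hexp] at this
    linear_combination this / 2
  have hs2 : Complex.sinh (φ/2) = (u ^ 2 - 1) / (2 * u) := by
    have := Complex.two_sinh (x := φ/2)
    rw [Complex.exp_neg, ← hu_def] at this
    have hinv : u * u⁻¹ = 1 := mul_inv_cancel₀ hu
    rw [eq_div_iff (by simp [hu] : (2:ℂ) * u ≠ 0)]
    linear_combination u * this - hinv
  rw [hs1, hs2, hEf, he1, he2, div_pow, div_pow]
  have h2u : (2 * u) ^ (2*m+3) ≠ 0 := pow_ne_zero _ (by simp [hu])
  have hφp : φ ^ (2*m+3) ≠ 0 := pow_ne_zero _ hφ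
  have hUp : (u ^ 2 - 1) ^ (2*m+3) ≠ 0 := pow_ne_zero _ hU
  field_simp
  ring

end Stmt13Aux

/-- For every `m ≥ 0`, the function `sinh(φ)/sinh^{2m+3}(φ/2)` has the convergent Laurent
expansion `-2^{2m+3} ∑_{k≥0} (B_{2k+1}^{(2m+3)}(m+1/2)/(2k+1)!) φ^{2k-2m-2}` about `φ = 0`
(valid on the punctured disc `0 < |φ| < 2π`). -/
theorem stmt_13 (m : ℕ) (φ : ℂ) (hφ : 0 < ‖φ‖) (hφ2 : ‖φ‖ < 2 * π) :
    HasSum (fun k : ℕ =>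
        -(2 : ℂ) ^ (2 * m + 3) *
          (((genBernoulli (2 * m + 3) ((m : ℚ) + 1 / 2) (2 * k + 1) : ℚ) : ℂ) /
            (((2 * k + 1).factorial : ℕ) : ℂ)) *
          φ ^ (2 * (k : ℤ) - (2 * (m : ℤ) + 2)))
      (Complex.sinh φ / (Complex.sinh (φ / 2)) ^ (2 * m + 3)) := by
  have hφne : φ ≠ 0 := by simpa using hφ
  set c : ℕ → ℂ := fun n => PowerSeries.coeff n (bernoulliPowerSeries ℂ ^ (2*m+3)
    * PowerSeries.rescale ((m:ℂ)+1/2) (PowerSeries.exp ℂ)) with hcdef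
  have h1 := Stmt13Aux.keyHasSum (2*m+3) ((m:ℂ)+5/2) hφ2
  have h2 := Stmt13Aux.keyHasSum (2*m+3) ((m:ℂ)+1/2) hφ2
  have hsym : ∀ n, PowerSeries.coeff n (bernoulliPowerSeries ℂ ^ (2*m+3)
      * PowerSeries.rescale ((m:ℂ)+5/2) (PowerSeries.exp ℂ)) = (-1:ℂ)^n * c n := by
    intro n
    have h := Stmt13Aux.rescale_neg_one (2*m+3) ((m:ℂ)+1/2)
    rw [show (((2*m+3 : ℕ)):ℂ) - ((m:ℂ)+1/2) = (m:ℂ)+5/2 by push_cast; ring] at h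
    rw [← h, PowerSeries.coeff_rescale]
  have hdiff := h1.sub h2
  rw [div_sub_div_same] at hdiff
  have hdiff2 : HasSum (fun n => ((-1:ℂ)^n - 1) * c n * φ^n)
      ((Complex.exp (((m:ℂ)+5/2)*φ) - Complex.exp (((m:ℂ)+1/2)*φ))
        / Stmt13Aux.Ef φ ^ (2*m+3)) := by
    refine hdiff.congr_fun fun n => ?_
    rw [hsym n]
    ring
  have hK := hdiff2.mul_left ((2:ℂ)^(2*m+2) * (φ^(2*m+3))⁻¹)
  rw [Stmt13Aux.value_eq m hφne hφ2] at hK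
  have hinj : Function.Injective (fun k : ℕ => 2*k+1) := fun a b h => by simp only at h; omega
  have hv : ∀ x ∉ Set.range (fun k : ℕ => 2*k+1),
      ((2:ℂ)^(2*m+2) * (φ^(2*m+3))⁻¹) * (((-1:ℂ)^x - 1) * c x * φ^x) = 0 := by
    intro x hx
    have hev : Even x := by
      rcases Nat.even_or_odd x with h | h
      · exact h
      · obtain ⟨k, hk⟩ := h
        exact absurd ⟨k, hk.symm⟩ hx
    rw [hev.neg_one_pow]
    simp
  have hfinal := (Function.Injective.hasSum_iff hinj hv).mpr hK
  refine HasSum.congr_fun hfinal fun k => ?_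
  show -(2 : ℂ) ^ (2 * m + 3) *
          (((genBernoulli (2 * m + 3) ((m : ℚ) + 1 / 2) (2 * k + 1) : ℚ) : ℂ) /
            (((2 * k + 1).factorial : ℕ) : ℂ)) *
          φ ^ (2 * (k : ℤ) - (2 * (m : ℤ) + 2))
      = ((2:ℂ)^(2*m+2) * (φ^(2*m+3))⁻¹) * (((-1:ℂ)^(2*k+1) - 1) * c (2*k+1) * φ^(2*k+1))
  have hodd : ((-1:ℂ)^(2*k+1) - 1) = -2 := by
    rw [Odd.neg_one_pow ⟨k, by ring⟩]
    norm_num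
  have hfac : (((2*k+1).factorial : ℕ) : ℂ) ≠ 0 :=
    Nat.cast_ne_zero.mpr (Nat.factorial_ne_zero _)
  have hgb : ((genBernoulli (2*m+3) ((m:ℚ)+1/2) (2*k+1) : ℚ) : ℂ)
      = (((2*k+1).factorial : ℕ) : ℂ) * c (2*k+1) := by
    have h := Stmt13Aux.genBernoulli_cast (2*m+3) ((m:ℚ)+1/2) (2*k+1)
    rw [show ((((m:ℚ)+1/2 : ℚ)):ℂ) = (m:ℂ)+1/2 by push_cast; ring] at h
    exact h
  have hzp : φ ^ (2*(k:ℤ) - (2*(m:ℤ)+2)) = φ^(2*k+1) * (φ^(2*m+3))⁻¹ := by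
    rw [show 2*(k:ℤ) - (2*(m:ℤ)+2) = ((2*k+1 : ℕ) : ℤ) - ((2*m+3 : ℕ) : ℤ) by push_cast; ring,
      zpow_sub₀ hφne, zpow_natCast, zpow_natCast, div_eq_mul_inv]
  rw [hzp, hgb, mul_div_cancel_left₀ _ hfac, hodd]
  ring
end

section
/- For every nonnegative integer m, the polynomial P_m(φ) = -2^{2m+2} ∑_{k=0}^{m+1} (2πi)^{2k} · (B_{2k}(1/2)/(2k)!) · (B_{2m+3-2k}^{(2m+3)}(m+1/2)/(2m+3-2k)!) · φ^{2m+2-2k} vanishes at φ = 2πi. -/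
open PowerSeries Real

section Aux
noncomputable abbrev EE : ℚ⟦X⟧ := PowerSeries.exp ℚ
noncomputable abbrev BB : ℚ⟦X⟧ := bernoulliPowerSeries ℚ
noncomputable abbrev re (a : ℚ) : ℚ⟦X⟧ := PowerSeries.rescale a EE

lemma re_mul_re (a b : ℚ) : re a * re b = re (a + b) :=
  PowerSeries.exp_mul_exp_eq_exp_add a b

lemma re_zero : re 0 = 1 := by
  simp [re, PowerSeries.rescale_zero]

lemma EE_sub_one_ne : (EE - 1 : ℚ⟦X⟧) ≠ 0 := by
  intro h
  have := congrArg (PowerSeries.coeff 1) h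
  simp [PowerSeries.coeff_exp, PowerSeries.coeff_one] at this

lemma hB : BB * (EE - 1) = X := bernoulliPowerSeries_mul_exp_sub_one ℚ

lemma re_one : re 1 = EE := by simp [re]

lemma re_neg_one_mul_EE : re (-1) * EE = 1 := by
  rw [← re_one, re_mul_re]; norm_num [re_zero]

lemma rescale_neg_one_B : PowerSeries.rescale (-1 : ℚ) BB = BB * EE := by
  have h1 := congrArg (PowerSeries.rescale (-1 : ℚ)) hB
  rw [map_mul, map_sub, map_one, PowerSeries.rescale_neg_one_X] at h1
  -- rescale (-1) EE - 1 = -(re (-1) * (EE - 1))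
  have h2 : (re (-1) : ℚ⟦X⟧) - 1 = -(re (-1) * (EE - 1)) := by
    rw [mul_sub, re_neg_one_mul_EE]; ring
  rw [show PowerSeries.rescale (-1 : ℚ) EE = re (-1) from rfl, h2] at h1
  have h3 : (PowerSeries.rescale (-1 : ℚ) BB * re (-1)) * (EE - 1) = BB * (EE - 1) := by
    rw [hB]; linear_combination -h1
  have h4 := mul_right_cancel₀ EE_sub_one_ne h3
  calc PowerSeries.rescale (-1 : ℚ) BB
      = PowerSeries.rescale (-1 : ℚ) BB * (re (-1) * EE) := by rw [re_neg_one_mul_EE, mul_one]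
    _ = (PowerSeries.rescale (-1 : ℚ) BB * re (-1)) * EE := by ring
    _ = BB * EE := by rw [h4]

lemma EE_pow (k : ℕ) : EE ^ k = re k := PowerSeries.exp_pow_eq_rescale_exp k

/-- evenness of centered series -/
lemma rescale_neg_one_centered (M : ℕ) (c : ℚ) (hc : (M : ℚ) = 2 * c) :
    PowerSeries.rescale (-1 : ℚ) (BB ^ M * re c) = BB ^ M * re c := by
  rw [map_mul, map_pow, rescale_neg_one_B, mul_pow, EE_pow,
    show PowerSeries.rescale (-1 : ℚ) (re c) = re (c * (-1)) from PowerSeries.rescale_rescale _ _ _,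
    mul_assoc, re_mul_re, show (M : ℚ) + c * (-1) = c by linarith]

lemma odd_coeff_zero {f : ℚ⟦X⟧} (hf : PowerSeries.rescale (-1 : ℚ) f = f) {n : ℕ}
    (hn : Odd n) : PowerSeries.coeff n f = 0 := by
  have := congrArg (PowerSeries.coeff n) hf
  rw [PowerSeries.coeff_rescale, hn.neg_one_pow] at this
  linarith

lemma dEE : PowerSeries.derivative ℚ EE = EE := by
  ext n
  rw [PowerSeries.coeff_derivative]
  simp only [PowerSeries.coeff_exp, Algebra.algebraMap_self, RingHom.id_apply]
  rw [Nat.factorial_succ]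
  push_cast
  have h1 : (n.factorial : ℚ) ≠ 0 := Nat.cast_ne_zero.2 n.factorial_ne_zero
  field_simp

lemma dre (a : ℚ) : PowerSeries.derivative ℚ (re a) = PowerSeries.C a * re a := by
  ext n
  rw [PowerSeries.coeff_derivative, PowerSeries.coeff_C_mul]
  simp only [re, PowerSeries.coeff_rescale, PowerSeries.coeff_exp, Algebra.algebraMap_self,
    RingHom.id_apply]
  rw [Nat.factorial_succ, pow_succ]
  have h1 : (n.factorial : ℚ) ≠ 0 := Nat.cast_ne_zero.2 n.factorial_ne_zero
  push_cast
  field_simp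

lemma sum_even_only (f : ℕ → ℚ) (n : ℕ) (h : ∀ j, Odd j → f j = 0) :
    ∑ j ∈ Finset.range (2 * n), f j = ∑ k ∈ Finset.range n, f (2 * k) := by
  induction n with
  | zero => simp
  | succ n ih =>
    rw [show 2 * (n + 1) = (2 * n + 1) + 1 by ring, Finset.sum_range_succ, Finset.sum_range_succ,
      Finset.sum_range_succ, ih, h (2 * n + 1) ⟨n, by ring⟩, add_zero]

lemma hDE1 : PowerSeries.derivative ℚ (EE - 1 : ℚ⟦X⟧) = EE := by
  rw [map_sub, dEE, Derivation.map_one_eq_zero, sub_zero]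

lemma psDerivAux (p : ℚ⟦X⟧) (n : ℕ) (c : ℚ) (hp : p * (EE-1)^(n+2) = X^(n+2) * re c) :
    PowerSeries.derivative ℚ p * (EE-1)^(n+2)
        + p * (((n+2:ℕ):ℚ⟦X⟧) * ((EE-1)^(n+1) * EE))
      = ((n+2:ℕ):ℚ⟦X⟧) * X^(n+1) * re c + PowerSeries.C c * X^(n+2) * re c := by
  have h := congrArg (PowerSeries.derivative ℚ) hp
  rw [Derivation.leibniz, Derivation.leibniz_pow, Derivation.leibniz, Derivation.leibniz_pow,
    hDE1, dre, PowerSeries.derivative_X, show n+2-1 = n+1 from rfl] at h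
  simp only [smul_eq_mul, nsmul_eq_mul, mul_one] at h
  linear_combination h

lemma key (m : ℕ) :
    PowerSeries.coeff (2*m+3) (BB ^ (2*m+4) * re ((m:ℚ)+1)) = 0 := by
  have hXpow : ∀ k : ℕ, BB ^ k * (EE-1)^k = X ^ k := fun k => by rw [← mul_pow, hB]
  set u : ℚ⟦X⟧ := PowerSeries.C ((m:ℚ)+1) with hudef
  have hP : (BB ^ (2*m+2) * re ((m:ℚ)+1)) * (EE-1)^(2*m+2) = X^(2*m+2) * re ((m:ℚ)+1) := by
    rw [← hXpow (2*m+2)]; ring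
  have hQ : (BB ^ (2*m+4) * re ((m:ℚ)+2)) * (EE-1)^(2*m+4)
      = X^(2*m+4) * (re ((m:ℚ)+1) * EE) := by
    rw [← hXpow (2*m+4), ← re_one, re_mul_re, show (m:ℚ)+1+1 = (m:ℚ)+2 by ring]; ring
  have hw : ((2*m+2 : ℕ) : ℚ⟦X⟧) = 2 * u := by
    rw [hudef, ← map_natCast (PowerSeries.C) (2*m+2), ← map_ofNat (PowerSeries.C) 2,
      ← map_mul]
    congr 1
    push_cast; ring
  have hd := psDerivAux _ (2*m) ((m:ℚ)+1) hP
  rw [hw, ← hudef] at hd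
  set P : ℚ⟦X⟧ := BB ^ (2*m+2) * re ((m:ℚ)+1) with hPdef
  set Q : ℚ⟦X⟧ := BB ^ (2*m+4) * re ((m:ℚ)+2) with hQdef
  set dP := PowerSeries.derivative ℚ P with hdPdef
  set A : ℚ⟦X⟧ := re ((m:ℚ)+1) with hAdef
  have hd3 : dP * (EE-1)^(2*m+4) =
      2*u * X^(2*m+1) * A * (EE-1)^2 + u * X^(2*m+2) * A * (EE-1)^2
        - 2*u * X^(2*m+2) * A * EE * (EE-1) := by
    linear_combination (EE-1)^2 * hd - 2*u*EE*(EE-1) * hP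
  have hre := re_neg_one_mul_EE
  have C1 : u * (Q * (EE - re (-1))) = 2*u * (X * P) - X^2 * dP := by
    apply mul_right_cancel₀ (pow_ne_zero (2*m+4) EE_sub_one_ne)
    linear_combination u * (EE - re (-1)) * hQ - 2*u * X * (EE-1)^2 * hP + X^2 * hd3
      - u * X^(2*m+4) * A * hre
  -- extract coefficient 2m+3
  have hC1c := congrArg (PowerSeries.coeff (2*m+3)) C1
  rw [hudef, PowerSeries.coeff_C_mul, map_sub] at hC1c
  rw [show (2*(PowerSeries.C ((m:ℚ)+1)) : ℚ⟦X⟧) = PowerSeries.C (2*((m:ℚ)+1)) by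
    rw [map_mul, map_ofNat]] at hC1c
  rw [PowerSeries.coeff_C_mul] at hC1c
  rw [show 2*m+3 = (2*m+2)+1 by omega, PowerSeries.coeff_succ_X_mul] at hC1c
  rw [show (2*m+2)+1 = (2*m+1)+2 by omega, PowerSeries.coeff_X_pow_mul] at hC1c
  rw [hdPdef, PowerSeries.coeff_derivative, show (2*m+1)+1 = 2*m+2 by omega] at hC1c
  have h5 : PowerSeries.coeff ((2*m+1)+2) (Q * (EE - re (-1))) = 0 := by
    have hm1 : ((m:ℚ)+1) ≠ 0 := by positivity
    apply mul_left_cancel₀ hm1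
    rw [mul_zero, hC1c]
    push_cast
    ring
  rw [show (2*m+1)+2 = 2*m+3 by omega] at h5
  have hQe : PowerSeries.rescale (-1 : ℚ) Q = Q := by
    rw [hQdef]
    exact rescale_neg_one_centered (2*m+4) ((m:ℚ)+2) (by push_cast; ring)
  have h6 : PowerSeries.coeff (2*m+3) (Q * (EE + re (-1))) = 0 := by
    apply odd_coeff_zero _ ⟨m+1, by ring⟩
    rw [map_mul, map_add, hQe]
    rw [show PowerSeries.rescale (-1:ℚ) EE = re (-1) from rfl,
      show PowerSeries.rescale (-1:ℚ) (re (-1)) = re ((-1)*(-1)) from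
        PowerSeries.rescale_rescale _ _ _]
    rw [show ((-1:ℚ))*(-1) = 1 by norm_num, re_one]
    ring
  have hH : BB ^ (2*m+4) * re ((m:ℚ)+1) = Q * re (-1) := by
    rw [hQdef, mul_assoc, re_mul_re, show (m:ℚ)+2+(-1) = (m:ℚ)+1 by ring]
  rw [hAdef, hH]
  have e1 : Q * (EE + re (-1)) = Q * EE + Q * re (-1) := by ring
  have e2 : Q * (EE - re (-1)) = Q * EE - Q * re (-1) := by ring
  rw [e1, map_add] at h6
  rw [e2, map_sub] at h5
  linarith

end Aux

/-- The distilled polynomial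
`P_m(φ) = -2^{2m+2} ∑_{k=0}^{m+1} (2πi)^{2k} (B_{2k}(1/2)/(2k)!)
          (B_{2m+3-2k}^{(2m+3)}(m+1/2)/(2m+3-2k)!) φ^{2m+2-2k}`
vanishes at `φ = 2πi`. -/
theorem stmt_14 (m : ℕ) :
    -(2 : ℂ) ^ (2 * m + 2) *
      ∑ k ∈ Finset.range (m + 2),
        (2 * (π : ℂ) * Complex.I) ^ (2 * k) *
          ((((Polynomial.bernoulli (2 * k)).eval ((1 : ℚ) / 2) : ℚ) : ℂ) /
            (((2 * k).factorial : ℕ) : ℂ)) *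
          (((genBernoulli (2 * m + 3) ((m : ℚ) + 1 / 2) (2 * m + 3 - 2 * k) : ℚ) : ℂ) /
            (((2 * m + 3 - 2 * k).factorial : ℕ) : ℂ)) *
          (2 * (π : ℂ) * Complex.I) ^ (2 * m + 2 - 2 * k) = 0 := by
  set G : ℚ⟦X⟧ := BB ^ (2*m+3) * re ((m:ℚ)+1/2) with hGdef
  set F0 : ℚ⟦X⟧ :=
    PowerSeries.mk fun n => Polynomial.aeval ((1:ℚ)/2) ((1/n.factorial : ℚ) • Polynomial.bernoulli n)
    with hF0def
  have hF0 : F0 = BB * re (1/2) := by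
    apply mul_right_cancel₀ EE_sub_one_ne
    rw [hF0def]
    rw [Polynomial.bernoulli_generating_function ((1:ℚ)/2), ← hB]
    ring
  have hF0even : PowerSeries.rescale (-1 : ℚ) F0 = F0 := by
    rw [hF0, show (BB : ℚ⟦X⟧) * re (1/2) = BB ^ 1 * re (1/2) by ring]
    exact rescale_neg_one_centered 1 (1/2) (by norm_num)
  have hF0odd : ∀ j, Odd j → PowerSeries.coeff j F0 = 0 :=
    fun j hj => odd_coeff_zero hF0even hj
  have hFG : F0 * G = BB ^ (2*m+4) * re ((m:ℚ)+1) := by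
    rw [hF0, hGdef, show (BB * re (1/2)) * (BB ^ (2*m+3) * re ((m:ℚ)+1/2))
      = BB ^ (2*m+4) * (re (1/2) * re ((m:ℚ)+1/2)) by ring, re_mul_re,
      show (1:ℚ)/2 + ((m:ℚ)+1/2) = (m:ℚ)+1 by ring]
  -- the rational identity
  have hrat : ∑ k ∈ Finset.range (m + 2),
      PowerSeries.coeff (2*k) F0 * PowerSeries.coeff (2*m+3-2*k) G = 0 := by
    have h1 : PowerSeries.coeff (2*m+3) (F0 * G)
        = ∑ j ∈ Finset.range (2*(m+2)), PowerSeries.coeff j F0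
            * PowerSeries.coeff (2*m+3-j) G := by
      rw [PowerSeries.coeff_mul, Finset.Nat.sum_antidiagonal_eq_sum_range_succ_mk,
        show (2*m+3).succ = 2*(m+2) by omega]
    rw [sum_even_only _ (m+2) (fun j hj => by rw [hF0odd j hj, zero_mul])] at h1
    rw [← h1, hFG, key m]
  -- now the complex statement
  have hterm : ∀ k ∈ Finset.range (m+2),
      (2 * (Real.pi : ℂ) * Complex.I) ^ (2 * k) *
          ((((Polynomial.bernoulli (2 * k)).eval ((1 : ℚ) / 2) : ℚ) : ℂ) /
            (((2 * k).factorial : ℕ) : ℂ)) *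
          (((genBernoulli (2 * m + 3) ((m : ℚ) + 1 / 2) (2 * m + 3 - 2 * k) : ℚ) : ℂ) /
            (((2 * m + 3 - 2 * k).factorial : ℕ) : ℂ)) *
          (2 * (Real.pi : ℂ) * Complex.I) ^ (2 * m + 2 - 2 * k)
        = (2 * (Real.pi : ℂ) * Complex.I) ^ (2*m+2) *
            ((PowerSeries.coeff (2*k) F0 * PowerSeries.coeff (2*m+3-2*k) G : ℚ) : ℂ) := by
    intro k hk
    have hk' : k ≤ m + 1 := by simpa using Nat.lt_succ_iff.mp (Finset.mem_range.mp hk)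
    have hc1 : PowerSeries.coeff (2*k) F0
        = (Polynomial.bernoulli (2 * k)).eval ((1 : ℚ) / 2) / (2*k).factorial := by
      rw [hF0def, PowerSeries.coeff_mk, map_smul, smul_eq_mul,
        Polynomial.coe_aeval_eq_eval]
      field_simp
    have hc2 : PowerSeries.coeff (2*m+3-2*k) G
        = genBernoulli (2 * m + 3) ((m : ℚ) + 1 / 2) (2 * m + 3 - 2 * k)
            / (2 * m + 3 - 2 * k).factorial := by
      rw [genBernoulli, hGdef]
      have hfac : ((2 * m + 3 - 2 * k).factorial : ℚ) ≠ 0 :=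
        Nat.cast_ne_zero.2 (Nat.factorial_ne_zero _)
      field_simp
    rw [hc1, hc2]
    conv_rhs => rw [show 2*m+2 = 2*k + (2*m+2-2*k) by omega, pow_add]
    push_cast
    have hfa : (((2*k).factorial : ℚ) : ℂ) ≠ 0 := by
      exact_mod_cast Nat.cast_ne_zero.2 (Nat.factorial_ne_zero (2*k))
    ring
  rw [Finset.sum_congr rfl hterm, ← Finset.mul_sum, ← Rat.cast_sum, hrat]
  simp
end
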